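/- arXiv:2508.15735 — 9 statements merged into one kernel-verified Lean document; each statement's English description precedes it below -/
import Mathlib

section
/- Let A, W: X → 2^{X*}, x ∈ dom W, u* ∈ X*, γ > 0, and suppose z ∈ (W + γA)^{-1}(Wx + γu*). If W is φ-uniformly monotone (i.e., ⟨x−y, x*−y*⟩ ≥ φ(‖x−y‖) for all (x,x*),(y,y*) in gra W, where φ: [0,+∞) → [0,+∞] is increasing and vanishes only at 0), then H_A(x,u*) ≥ φ(‖x−z‖)/γ. -/
open scoped Topology

variable {X : Type*} [NormedAddCommGroup X] [NormedSpace ℝ X] [CompleteSpace X]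

/-- The Haraux function of a set-valued operator `A : X → 2^{X*}`. -/
noncomputable def haraux (A : X → Set (X →L[ℝ] ℝ)) (x : X) (u : X →L[ℝ] ℝ) : EReal :=
  ⨆ (p : X × (X →L[ℝ] ℝ)) (_ : p.2 ∈ A p.1), (((p.2 - u) (x - p.1) : ℝ) : EReal)

/-- Monotonicity of a set-valued operator. -/
def IsMonotoneOp (A : X → Set (X →L[ℝ] ℝ)) : Prop :=
  ∀ ⦃x x' y y'⦄, x' ∈ A x → y' ∈ A y → 0 ≤ (x' - y') (x - y)

/-- Maximal monotonicity of a set-valued operator. -/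
def IsMaxMonotoneOp (A : X → Set (X →L[ℝ] ℝ)) : Prop :=
  IsMonotoneOp A ∧
    ∀ ⦃x x'⦄, (∀ ⦃y y'⦄, y' ∈ A y → 0 ≤ (x' - y') (x - y)) → x' ∈ A x

/-- Theorem 1(ii): if `W` is `φ`-uniformly monotone and `z ∈ (W + γA)⁻¹(Wx + γu*)`,
then `H_A(x,u*) ≥ φ(‖x−z‖)/γ`. -/
theorem haraux_lower_bound_uniformly_monotone
    (A W : X → Set (X →L[ℝ] ℝ)) (x z : X) (u : X →L[ℝ] ℝ) (γ : ℝ)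
    (φ : ℝ → EReal)
    (hφ0 : ∀ t, 0 ≤ t → 0 ≤ φ t) (hφmono : MonotoneOn φ (Set.Ici (0 : ℝ)))
    (hφzero : φ 0 = 0) (hφpos : ∀ t, 0 ≤ t → φ t = 0 → t = 0)
    (hW : ∀ ⦃y y' v v'⦄, y' ∈ W y → v' ∈ W v →
      φ ‖y - v‖ ≤ (((y' - v') (y - v) : ℝ) : EReal))
    (hx : (W x).Nonempty) (hγ : 0 < γ)
    (hz : ∃ xs ∈ W x, ∃ w ∈ W z, ∃ a ∈ A z, xs + γ • u = w + γ • a) :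
    φ ‖x - z‖ / (γ : EReal) ≤ haraux A x u := by
  obtain ⟨xs, hxs, w, hw, a, ha, heq⟩ := hz
  have key : ((xs - w) (x - z) : ℝ) = γ * ((a - u) (x - z)) := by
    have h1 : xs - w = γ • (a - u) := by
      have := heq
      ext v
      have hv := congrArg (fun f => f v) heq
      simp only [ContinuousLinearMap.add_apply, ContinuousLinearMap.smul_apply, smul_eq_mul] at hv
      simp [ContinuousLinearMap.sub_apply, ContinuousLinearMap.smul_apply]
      linarith
    rw [h1]; simp [mul_comm]
  have hle : φ ‖x - z‖ / (γ : EReal) ≤ (((a - u) (x - z) : ℝ) : EReal) := by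
    have h2 : φ ‖x - z‖ ≤ (((xs - w) (x - z) : ℝ) : EReal) := hW hxs hw
    calc φ ‖x - z‖ / (γ : EReal)
        ≤ (((xs - w) (x - z) : ℝ) : EReal) / (γ : EReal) :=
          EReal.div_le_div_right_of_nonneg (by exact_mod_cast hγ.le) h2
      _ = (((a - u) (x - z) : ℝ) : EReal) := by
          rw [key, ← EReal.coe_div]
          congr 1
          field_simp
  refine hle.trans ?_
  have := le_iSup (fun p : X × (X →L[ℝ] ℝ) =>
    ⨆ (_ : p.2 ∈ A p.1), (((p.2 - u) (x - p.1) : ℝ) : EReal)) (z, a)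
  refine le_trans ?_ this
  simp [ha]
end

section
/- Let A, W: X → 2^{X*}, x ∈ dom W, u* ∈ X*, γ > 0, and suppose z ∈ (W + γA)^{-1}(Wx + γu*). If W is α-strongly monotone for some α > 0, then H_A(x,u*) ≥ α‖x−z‖²/γ. -/
open scoped Topology

variable {X : Type*} [NormedAddCommGroup X] [NormedSpace ℝ X] [CompleteSpace X]

/-- Theorem 1(iii): if `W` is `α`-strongly monotone and `z ∈ (W + γA)⁻¹(Wx + γu*)`,
then `H_A(x,u*) ≥ α‖x−z‖²/γ`. -/
theorem haraux_lower_bound_strongly_monotone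
    (A W : X → Set (X →L[ℝ] ℝ)) (x z : X) (u : X →L[ℝ] ℝ) (γ α : ℝ)
    (hα : 0 < α)
    (hW : ∀ ⦃y y' v v'⦄, y' ∈ W y → v' ∈ W v →
      α * ‖y - v‖ ^ 2 ≤ (y' - v') (y - v))
    (hx : (W x).Nonempty) (hγ : 0 < γ)
    (hz : ∃ xs ∈ W x, ∃ w ∈ W z, ∃ a ∈ A z, xs + γ • u = w + γ • a) :
    ((α * ‖x - z‖ ^ 2 / γ : ℝ) : EReal) ≤ haraux A x u := by
  obtain ⟨xs, hxs, w, hw, a, ha, heq⟩ := hz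
  have key : α * ‖x - z‖ ^ 2 / γ ≤ (a - u) (x - z) := by
    have h1 : α * ‖x - z‖ ^ 2 ≤ (xs - w) (x - z) := hW hxs hw
    have h2 : (xs - w) (x - z) = γ * (a - u) (x - z) := by
      have : xs - w = γ • (a - u) := by
        have := heq
        apply_fun (fun t => t - w - γ • u) at this
        simp only [smul_sub]
        abel_nf
        abel_nf at this
        linear_combination (norm := module) this
      rw [this]; simp
    rw [div_le_iff₀ hγ]
    linarith [h2 ▸ h1]
  refine le_trans ?_ (le_iSup₂ (f := fun (p : X × (X →L[ℝ] ℝ)) (_ : p.2 ∈ A p.1) => (((p.2 - u) (x - p.1) : ℝ) : EReal)) (z, a) ha)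
  exact_mod_cast key
end

section
/- Let A: X → 2^{X*}, let f ∈ Γ₀(X) be Gâteaux differentiable on int dom f with dom ∇f = int dom f, let x ∈ int dom f, u* ∈ X*, γ > 0, and suppose z ∈ (∇f + γA)^{-1}(∇f(x) + γu*). Then H_A(x,u*) ≥ (D_f(x,z) + D_f(z,x))/γ, where D_f is the Bregman distance of f. -/
open scoped Topology
attribute [local instance] Classical.propDecidable

variable {X : Type*} [NormedAddCommGroup X] [NormedSpace ℝ X] [CompleteSpace X]

/-- The Bregman distance `D_f` associated with `f`, whose Gâteaux gradient on
`int dom f` is `g`. -/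
noncomputable def bregman (f : X → EReal) (g : X → (X →L[ℝ] ℝ)) (x y : X) : EReal :=
  if y ∈ interior {w | f w ≠ ⊤} then f x - f y - (((g y) (x - y) : ℝ) : EReal) else ⊤

/-- Theorem 1(v): with `W = ∇f` for `f ∈ Γ₀(X)` Gâteaux differentiable on
`int dom f`, `H_A(x,u*) ≥ (D_f(x,z) + D_f(z,x))/γ`. -/
theorem haraux_lower_bound_bregman
    (A : X → Set (X →L[ℝ] ℝ)) (f : X → EReal) (g : X → (X →L[ℝ] ℝ))
    (x z : X) (u : X →L[ℝ] ℝ) (γ : ℝ)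
    (hproper : (∃ w, f w ≠ ⊤) ∧ ∀ w, f w ≠ ⊥)
    (hlsc : LowerSemicontinuous f)
    (hconv : ∀ (w v : X) (a b : ℝ), 0 ≤ a → 0 ≤ b → a + b = 1 →
      f (a • w + b • v) ≤ (a : EReal) * f w + (b : EReal) * f v)
    (hgateaux : ∀ y ∈ interior {w | f w ≠ ⊤}, ∀ d : X,
      Filter.Tendsto (fun t : ℝ => ((f (y + t • d)).toReal - (f y).toReal) / t)
        (𝓝[≠] (0 : ℝ)) (𝓝 ((g y) d)))
    (hx : x ∈ interior {w | f w ≠ ⊤}) (hγ : 0 < γ)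
    (hzdom : z ∈ interior {w | f w ≠ ⊤})
    (hz : ∃ a ∈ A z, g x + γ • u = g z + γ • a) :
    (bregman f g x z + bregman f g z x) / (γ : EReal) ≤ haraux A x u := by
  obtain ⟨a, haA, heq⟩ := hz
  have hfx := EReal.coe_toReal (interior_subset hx) (hproper.2 x)
  have hfz := EReal.coe_toReal (interior_subset hzdom) (hproper.2 z)
  set fx := (f x).toReal
  set fz := (f z).toReal
  -- pairing identity from heq
  have hpair : (g x) (x - z) + γ * (u (x - z)) = (g z) (x - z) + γ * (a (x - z)) := by
    have := congrArg (fun T : X →L[ℝ] ℝ => T (x - z)) heq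
    simpa using this
  have hr : (fx - fz - (g z) (x - z)) + (fz - fx - (g x) (z - x)) = γ * ((a - u) (x - z)) := by
    have h1 : (g x) (z - x) = - (g x) (x - z) := by
      rw [← map_neg, neg_sub]
    simp only [ContinuousLinearMap.sub_apply, h1]
    nlinarith [hpair]
  have hsum : bregman f g x z + bregman f g z x = ((γ * ((a - u) (x - z)) : ℝ) : EReal) := by
    rw [bregman, bregman, if_pos hzdom, if_pos hx, ← hfx, ← hfz, ← hr]
    push_cast
    ring
  rw [hsum]
  have hdiv : ((γ * ((a - u) (x - z)) : ℝ) : EReal) / (γ : EReal)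
      = (((a - u) (x - z) : ℝ) : EReal) := by
    rw [← EReal.coe_div, mul_div_cancel_left₀ _ (ne_of_gt hγ)]
  rw [hdiv]
  exact le_iSup_of_le (⟨z, a⟩ : X × (X →L[ℝ] ℝ)) (le_iSup_of_le haA le_rfl)
end

section
/- Let M: X → 2^{X*} be φ-uniformly monotone where φ: [0,+∞) → [0,+∞] is increasing, vanishes only at 0, and satisfies φ(t)/t → +∞ as t → +∞, and suppose dom M is unbounded. Then inf_{y*∈My} ‖y*‖ → +∞ as ‖y‖ → +∞ with y ∈ dom M. -/
open scoped Topology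

variable {X : Type*} [NormedAddCommGroup X] [NormedSpace ℝ X] [CompleteSpace X]

/-- Coercivity: if `M` is `φ`-uniformly monotone with `φ(t)/t → +∞` and `dom M` is
unbounded, then `inf_{y* ∈ My} ‖y*‖ → +∞` as `‖y‖ → +∞` along `dom M`. -/
theorem uniformly_monotone_coercive
    (M : X → Set (X →L[ℝ] ℝ)) (φ : ℝ → EReal)
    (hφ0 : ∀ t, 0 ≤ t → 0 ≤ φ t) (hφmono : MonotoneOn φ (Set.Ici (0 : ℝ)))
    (hφzero : φ 0 = 0) (hφpos : ∀ t, 0 ≤ t → φ t = 0 → t = 0)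
    (hφgrowth : ∀ c : ℝ, ∃ T : ℝ, ∀ t, T ≤ t → ((c * t : ℝ) : EReal) ≤ φ t)
    (hM : ∀ ⦃y y' v v'⦄, y' ∈ M y → v' ∈ M v →
      φ ‖y - v‖ ≤ (((y' - v') (y - v) : ℝ) : EReal))
    (hdom : ∀ R : ℝ, ∃ y : X, (M y).Nonempty ∧ R < ‖y‖) :
    ∀ C : ℝ, ∃ R : ℝ, ∀ y : X, ∀ y' ∈ M y, R ≤ ‖y‖ → C ≤ ‖y'‖ := by
  intro C
  obtain ⟨v, ⟨v', hv'⟩, -⟩ := hdom 0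
  obtain ⟨T, hT⟩ := hφgrowth (C + ‖v'‖)
  refine ⟨‖v‖ + max T 1, fun y y' hy' hR => ?_⟩
  set t := ‖y - v‖ with ht
  have htpos : max T 1 ≤ t := by
    have := norm_sub_norm_le y v
    simp only [ht]; linarith
  have h1 : ((C + ‖v'‖) * t : ℝ) ≤ ((y' - v') (y - v) : ℝ) := by
    have := (hT t (le_trans (le_max_left _ _) htpos)).trans (hM hy' hv')
    exact_mod_cast this
  have h2 : ((y' - v') (y - v) : ℝ) ≤ (‖y'‖ + ‖v'‖) * t := by
    calc ((y' - v') (y - v) : ℝ) ≤ ‖y' - v'‖ * ‖y - v‖ := le_trans (le_abs_self _) ((y' - v').le_opNorm _)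
    _ ≤ (‖y'‖ + ‖v'‖) * t := by
        apply mul_le_mul_of_nonneg_right (norm_sub_le _ _) (norm_nonneg _)
  have htpos' : (0:ℝ) < t := lt_of_lt_of_le one_pos (le_trans (le_max_right _ _) htpos)
  have := le_of_mul_le_mul_right (h1.trans h2) htpos'
  linarith
end

section
/- Let φ: X → (−∞,+∞] be proper, W: X → 2^{X*} α-strongly monotone (α > 0), x ∈ dom W, u* ∈ X*, γ > 0, and suppose z ∈ (W + γ∂φ)^{-1}(Wx + γu*). Then L_φ(x,u*) ≥ α‖x−z‖²/γ. -/
open scoped Topology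

variable {X : Type*} [NormedAddCommGroup X] [NormedSpace ℝ X] [CompleteSpace X]

/-- The Fenchel conjugate of an extended-real-valued function. -/
noncomputable def fconj (f : X → EReal) (u : X →L[ℝ] ℝ) : EReal :=
  ⨆ y : X, (((u y : ℝ) : EReal) - f y)

/-- The convex subdifferential of an extended-real-valued function. -/
def subdiff (f : X → EReal) (x : X) : Set (X →L[ℝ] ℝ) :=
  {xs | ∀ y : X, ((xs (y - x) : ℝ) : EReal) + f x ≤ f y}

/-- The Fenchel–Young function `L_φ(x,u*) = φ(x) + φ*(u*) − ⟨x,u*⟩`. -/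
noncomputable def fenchelYoung (f : X → EReal) (x : X) (u : X →L[ℝ] ℝ) : EReal :=
  f x + fconj f u - ((u x : ℝ) : EReal)

/-!
Strong monotonicity applied to `xs ∈ W x` and `w ∈ W z`, where `xs - w = γ (a - u)` with
`a ∈ ∂φ(z)`, gives `α‖x - z‖² ≤ γ ⟨x - z, a - u⟩`. On the other hand the subgradient
inequality `φ x ≥ φ z + ⟨x - z, a⟩` and the Fenchel–Young bound `φ* u ≥ ⟨z, u⟩ - φ z`
add up to `L_φ(x, u) ≥ ⟨x - z, a - u⟩`.
-/

section

variable {E : Type*} [NormedAddCommGroup E] [NormedSpace ℝ E]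

theorem ne_top_of_mem_subdiff {f : E → EReal} {z : E} {a : E →L[ℝ] ℝ} (ha : a ∈ subdiff f z)
    (hf : ∃ w, f w ≠ ⊤) : f z ≠ ⊤ := by
  obtain ⟨w, hw⟩ := hf
  intro hz
  have := ha w
  rw [hz, EReal.coe_add_top, top_le_iff] at this
  exact hw this

theorem sub_le_fconj (f : E → EReal) (u : E →L[ℝ] ℝ) (z : E) :
    ((u z : ℝ) : EReal) - f z ≤ fconj f u :=
  le_iSup (fun y => ((u y : ℝ) : EReal) - f y) z

theorem sub_apply_sub_le_fenchelYoung {f : E → EReal} {x z : E} {a u : E →L[ℝ] ℝ}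
    (ha : a ∈ subdiff f z) (hz_top : f z ≠ ⊤) (hz_bot : f z ≠ ⊥) :
    (((a - u) (x - z) : ℝ) : EReal) ≤ fenchelYoung f x u := by
  lift f z to ℝ using ⟨hz_top, hz_bot⟩ with r hr
  have hsubgrad : ((a (x - z) + r : ℝ) : EReal) ≤ f x := by
    rw [EReal.coe_add, hr]
    exact ha x
  have hconj : ((u z - r : ℝ) : EReal) ≤ fconj f u := by
    rw [EReal.coe_sub, hr]
    exact sub_le_fconj f u z
  calc (((a - u) (x - z) : ℝ) : EReal)
      = ((a (x - z) + r + (u z - r) - u x : ℝ) : EReal) := by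
        congr 1; simp only [sub_apply, map_sub]; ring
    _ ≤ fenchelYoung f x u := by
        rw [EReal.coe_sub, EReal.coe_add]
        exact EReal.sub_le_sub (add_le_add hsubgrad hconj) le_rfl

end

theorem sub_eq_smul_sub_of_add_smul_eq {R M : Type*} [CommRing R] [AddCommGroup M] [Module R M]
    {xs w a u : M} {γ : R} (h : xs + γ • u = w + γ • a) : xs - w = γ • (a - u) := by
  linear_combination (norm := module) h

theorem fenchelYoung_lower_bound_strongly_monotone_general
    (φ : X → EReal) (hproper : (∃ w, φ w ≠ ⊤) ∧ ∀ w, φ w ≠ ⊥)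
    (W : X → Set (X →L[ℝ] ℝ)) (x z : X) (u : X →L[ℝ] ℝ) (γ α : ℝ)
    (hW : ∀ ⦃y y' v v'⦄, y' ∈ W y → v' ∈ W v →
      α * ‖y - v‖ ^ 2 ≤ (y' - v') (y - v))
    (hγ : 0 < γ)
    (hz : ∃ xs ∈ W x, ∃ w ∈ W z, ∃ a ∈ subdiff φ z, xs + γ • u = w + γ • a) :
    ((α * ‖x - z‖ ^ 2 / γ : ℝ) : EReal) ≤ fenchelYoung φ x u := by
  obtain ⟨xs, hxs, w, hw, a, ha, heq⟩ := hz
  have hkey : α * ‖x - z‖ ^ 2 / γ ≤ (a - u) (x - z) := by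
    rw [div_le_iff₀ hγ]
    calc α * ‖x - z‖ ^ 2 ≤ (xs - w) (x - z) := hW hxs hw
      _ = (a - u) (x - z) * γ := by
        rw [sub_eq_smul_sub_of_add_smul_eq heq, smul_apply, smul_eq_mul,
          mul_comm]
  exact (EReal.coe_le_coe_iff.2 hkey).trans
    (sub_apply_sub_le_fenchelYoung ha (ne_top_of_mem_subdiff ha hproper.1) (hproper.2 z))

/-- Theorem 3(iii): if `W` is `α`-strongly monotone and `z ∈ (W + γ∂φ)⁻¹(Wx + γu*)`,
then `L_φ(x,u*) ≥ α‖x−z‖²/γ`. -/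
theorem fenchelYoung_lower_bound_strongly_monotone
    (φ : X → EReal) (hproper : (∃ w, φ w ≠ ⊤) ∧ ∀ w, φ w ≠ ⊥)
    (W : X → Set (X →L[ℝ] ℝ)) (x z : X) (u : X →L[ℝ] ℝ) (γ α : ℝ)
    (hα : 0 < α)
    (hW : ∀ ⦃y y' v v'⦄, y' ∈ W y → v' ∈ W v →
      α * ‖y - v‖ ^ 2 ≤ (y' - v') (y - v))
    (hx : (W x).Nonempty) (hγ : 0 < γ)
    (hz : ∃ xs ∈ W x, ∃ w ∈ W z, ∃ a ∈ subdiff φ z, xs + γ • u = w + γ • a) :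
    ((α * ‖x - z‖ ^ 2 / γ : ℝ) : EReal) ≤ fenchelYoung φ x u :=
  fenchelYoung_lower_bound_strongly_monotone_general φ hproper W x z u γ α hW hγ hz
end

section
/- Let H be a real Hilbert space, A: H → 2^H maximally monotone, x, u* ∈ H, γ > 0. Then H_A(x,u*) ≥ ‖x − J_{γA}(x + γu*)‖²/γ, where J_{γA} = (Id + γA)^{-1} is the resolvent. -/
open scoped Topology RealInnerProductSpace

variable {H : Type*} [NormedAddCommGroup H] [InnerProductSpace ℝ H] [CompleteSpace H]

/-- The Haraux function of a set-valued operator on a real Hilbert space. -/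
noncomputable def harauxH (A : H → Set H) (x u : H) : EReal :=
  ⨆ (p : H × H) (_ : p.2 ∈ A p.1), ((⟪x - p.1, p.2 - u⟫ : ℝ) : EReal)

/-- Monotonicity on a real Hilbert space. -/
def IsMonotoneH (A : H → Set H) : Prop :=
  ∀ ⦃x x' y y'⦄, x' ∈ A x → y' ∈ A y → (0 : ℝ) ≤ ⟪x - y, x' - y'⟫

/-- Maximal monotonicity on a real Hilbert space. -/
def IsMaxMonotoneH (A : H → Set H) : Prop :=
  IsMonotoneH A ∧
    ∀ ⦃x x'⦄, (∀ ⦃y y'⦄, y' ∈ A y → (0 : ℝ) ≤ ⟪x - y, x' - y'⟫) → x' ∈ A x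

/-!
The pair `(p, a)` with `p = J(x + γu)` and `x + γu = p + γa`, `a ∈ A p`, lies in the graph of `A`
and satisfies `x − p = γ(a − u)`, so its term `⟪x − p, a − u⟫` in the supremum defining `H_A(x, u)`
equals `‖x − p‖² / γ`.
-/

theorem le_harauxH_of_mem {E : Type*} [NormedAddCommGroup E] [InnerProductSpace ℝ E]
    {A : E → Set E} {x u y y' : E} (h : y' ∈ A y) :
    ((⟪x - y, y' - u⟫ : ℝ) : EReal) ≤ harauxH A x u :=
  le_iSup₂_of_le (f := fun (p : E × E) _ => ((⟪x - p.1, p.2 - u⟫ : ℝ) : EReal))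
    (y, y') h le_rfl

-- Holds for every `γ`, including `γ = 0` where both sides are `0`.
theorem norm_smul_sq_div_eq_inner {E : Type*} [NormedAddCommGroup E] [InnerProductSpace ℝ E]
    (γ : ℝ) (v : E) : ‖γ • v‖ ^ 2 / γ = ⟪γ • v, v⟫ := by
  rw [norm_smul, real_inner_smul_left, real_inner_self_eq_norm_sq, mul_pow, Real.norm_eq_abs,
    sq_abs, sq γ, mul_assoc, mul_div_cancel_left_of_imp]
  simp +contextual

theorem haraux_ge_resolvent_bound_general
    (A : H → Set H) (γ : ℝ)
    (J : H → H) (hJ : ∀ w : H, ∃ a ∈ A (J w), w = J w + γ • a)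
    (x u : H) :
    ((‖x - J (x + γ • u)‖ ^ 2 / γ : ℝ) : EReal) ≤ harauxH A x u := by
  obtain ⟨a, ha, hw⟩ := hJ (x + γ • u)
  have hx : x - J (x + γ • u) = γ • (a - u) := by
    rw [smul_sub]
    linear_combination (norm := module) hw
  calc ((‖x - J (x + γ • u)‖ ^ 2 / γ : ℝ) : EReal)
      = ((⟪x - J (x + γ • u), a - u⟫ : ℝ) : EReal) := by rw [hx, norm_smul_sq_div_eq_inner]
    _ ≤ harauxH A x u := le_harauxH_of_mem ha

/-- Carlier's inequality: `H_A(x,u*) ≥ ‖x − J_{γA}(x + γu*)‖²/γ`, where `J_{γA}` is the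
resolvent `(Id + γA)⁻¹` of the maximally monotone operator `A`. -/
theorem haraux_ge_resolvent_bound
    (A : H → Set H) (hA : IsMaxMonotoneH A) (γ : ℝ) (hγ : 0 < γ)
    (J : H → H) (hJ : ∀ w : H, ∃ a ∈ A (J w), w = J w + γ • a)
    (x u : H) :
    ((‖x - J (x + γ • u)‖ ^ 2 / γ : ℝ) : EReal) ≤ harauxH A x u :=
  haraux_ge_resolvent_bound_general A γ J hJ x u
end

section
/- Let H be a real Hilbert space, φ ∈ Γ₀(H), x, u* ∈ H, γ > 0. Then φ(x) + φ*(u*) − ⟨x,u*⟩ ≥ ‖x − prox_{γφ}(x + γu*)‖²/γ, where prox_{γφ} = (Id + γ∂φ)^{-1}. -/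
open scoped Topology RealInnerProductSpace

variable {H : Type*} [NormedAddCommGroup H] [InnerProductSpace ℝ H] [CompleteSpace H]

/-- The Fenchel conjugate on a real Hilbert space. -/
noncomputable def fconjH (f : H → EReal) (u : H) : EReal :=
  ⨆ y : H, (((⟪y, u⟫ : ℝ) : EReal) - f y)

/-- The convex subdifferential on a real Hilbert space. -/
def subdiffH (f : H → EReal) (x : H) : Set H :=
  {xs | ∀ y : H, ((⟪y - x, xs⟫ : ℝ) : EReal) + f x ≤ f y}

/-! With `p = prox_{γφ}(x + γu)` we have `x + γu = p + γa` for some `a ∈ ∂φ(p)`. Adding the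
subgradient inequality `φ x ≥ φ p + ⟪x - p, a⟫` to `φ* u ≥ ⟪p, u⟫ - φ p` (both need `φ p` finite)
gives `φ x + φ* u - ⟪x, u⟫ ≥ ⟪x - p, a - u⟫`, and `x - p = γ (a - u)` makes the right side
`‖x - p‖² / γ`. -/

section

variable {E : Type*} [NormedAddCommGroup E] [InnerProductSpace ℝ E]

theorem ne_top_of_mem_subdiffH {f : E → EReal} {p a : E} (ha : a ∈ subdiffH f p)
    (hf : ∃ w, f w ≠ ⊤) : f p ≠ ⊤ := by
  obtain ⟨w, hw⟩ := hf
  intro htop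
  have := ha w
  rw [htop, EReal.add_top_of_ne_bot (EReal.coe_ne_bot _), top_le_iff] at this
  exact hw this

theorem inner_sub_le_fconjH (f : E → EReal) (y u : E) :
    ((⟪y, u⟫ : ℝ) : EReal) - f y ≤ fconjH f u :=
  le_iSup (fun y => ((⟪y, u⟫ : ℝ) : EReal) - f y) y

theorem inner_sub_le_fenchelYoung_of_mem_subdiffH {f : E → EReal} {p a : E}
    (ha : a ∈ subdiffH f p) (hp_top : f p ≠ ⊤) (hp_bot : f p ≠ ⊥) (x u : E) :
    ((⟪x - p, a - u⟫ : ℝ) : EReal) ≤ f x + fconjH f u - ((⟪x, u⟫ : ℝ) : EReal) := by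
  lift f p to ℝ using ⟨hp_top, hp_bot⟩ with r hr
  have hsubgrad : ((⟪x - p, a⟫ + r : ℝ) : EReal) ≤ f x := by
    rw [EReal.coe_add, hr]; exact ha x
  have hconj : ((⟪p, u⟫ - r : ℝ) : EReal) ≤ fconjH f u := by
    rw [EReal.coe_sub, hr]; exact inner_sub_le_fconjH f p u
  have hsplit : ⟪x - p, a - u⟫ + ⟪x, u⟫ = (⟪x - p, a⟫ + r) + (⟪p, u⟫ - r) := by
    simp only [inner_sub_left, inner_sub_right]; ring
  rw [EReal.le_sub_iff_add_le (.inl (EReal.coe_ne_bot _)) (.inl (EReal.coe_ne_top _)),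
    ← EReal.coe_add, hsplit, EReal.coe_add]
  exact add_le_add hsubgrad hconj

theorem real_inner_eq_norm_sq_div_of_eq_smul {v w : E} {γ : ℝ} (hγ : γ ≠ 0)
    (h : v = γ • w) : ⟪v, w⟫ = ‖v‖ ^ 2 / γ := by
  rw [h, real_inner_smul_left, norm_smul, mul_pow, Real.norm_eq_abs, sq_abs,
    real_inner_self_eq_norm_sq]
  field_simp

end

theorem fenchelYoung_ge_prox_bound_general
    (φ : H → EReal)
    (hproper : (∃ w, φ w ≠ ⊤) ∧ ∀ w, φ w ≠ ⊥)
    (γ : ℝ) (hγ : 0 < γ)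
    (P : H → H) (hP : ∀ w : H, ∃ a ∈ subdiffH φ (P w), w = P w + γ • a)
    (x u : H) :
    ((‖x - P (x + γ • u)‖ ^ 2 / γ : ℝ) : EReal)
      ≤ φ x + fconjH φ u - ((⟪x, u⟫ : ℝ) : EReal) := by
  obtain ⟨a, ha, hprox⟩ := hP (x + γ • u)
  set p := P (x + γ • u)
  have hresidual : x - p = γ • (a - u) := by
    rw [smul_sub]
    linear_combination (norm := module) hprox
  rw [← real_inner_eq_norm_sq_div_of_eq_smul hγ.ne' hresidual]
  exact inner_sub_le_fenchelYoung_of_mem_subdiffH ha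
    (ne_top_of_mem_subdiffH ha hproper.1) (hproper.2 p) x u

/-- Carlier's inequality for functions: for `φ ∈ Γ₀(H)`,
`φ(x) + φ*(u*) − ⟨x,u*⟩ ≥ ‖x − prox_{γφ}(x + γu*)‖²/γ`, where
`prox_{γφ} = (Id + γ∂φ)⁻¹`. -/
theorem fenchelYoung_ge_prox_bound
    (φ : H → EReal)
    (hproper : (∃ w, φ w ≠ ⊤) ∧ ∀ w, φ w ≠ ⊥)
    (hlsc : LowerSemicontinuous φ)
    (hconv : ∀ (w v : H) (a b : ℝ), 0 ≤ a → 0 ≤ b → a + b = 1 →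
      φ (a • w + b • v) ≤ (a : EReal) * φ w + (b : EReal) * φ v)
    (γ : ℝ) (hγ : 0 < γ)
    (P : H → H) (hP : ∀ w : H, ∃ a ∈ subdiffH φ (P w), w = P w + γ • a)
    (x u : H) :
    ((‖x - P (x + γ • u)‖ ^ 2 / γ : ℝ) : EReal)
      ≤ φ x + fconjH φ u - ((⟪x, u⟫ : ℝ) : EReal) :=
  fenchelYoung_ge_prox_bound_general φ hproper γ hγ P hP x u
end

section
/- Let φ: ℝ^N → (−∞,+∞] be the negative Burg entropy φ(x) = −∑ᵢ ln(ξᵢ) for x = (ξᵢ) with all ξᵢ > 0 and +∞ otherwise. For x ∈ (0,∞)^N, u* = (μᵢ*) ∈ (−∞,0)^N, and γ > 0, it holds that L_φ(x,u*) = −N − ∑ᵢ (ln(−ξᵢμᵢ*) + ξᵢμᵢ*) and L_φ(x,u*) ≥ ∑ᵢ γ|1 + ξᵢμᵢ*|² / ((1+γ)(1 − γξᵢμᵢ*)). -/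
open scoped RealInnerProductSpace
attribute [local instance] Classical.propDecidable

/-- The Fenchel conjugate on Euclidean space. -/
noncomputable def fconjE {N : ℕ} (f : EuclideanSpace ℝ (Fin N) → EReal)
    (u : EuclideanSpace ℝ (Fin N)) : EReal :=
  ⨆ y : EuclideanSpace ℝ (Fin N), (((⟪y, u⟫ : ℝ) : EReal) - f y)

/-- The negative Burg entropy on `ℝ^N`. -/
noncomputable def burg (N : ℕ) : EuclideanSpace ℝ (Fin N) → EReal := fun y =>
  if ∀ i, 0 < y i then (((-∑ i, Real.log (y i)) : ℝ) : EReal) else ⊤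

/-!
The conjugate of `-log` at `μ < 0` is `-1 - log(-μ)`, attained at `-1/μ`, so `φ*` is computed
coordinatewise and `L_φ(x,u*)` is the sum of the scalar gaps `-1 - log(-t) - t` at `t = ξᵢμᵢ*`.
The lower bound on each gap comes from `log s = log a + log (s / a) ≤ (a - 1) + (s / a - 1)` at
the Bregman point `a = (1 + γ s) / (1 + γ)`.
-/

namespace Real

theorem log_le_add_div_sub_two {a s : ℝ} (ha : 0 < a) (hs : 0 < s) :
    log s ≤ a + s / a - 2 := by
  have hsplit : log s = log a + log (s / a) := by
    rw [← log_mul ha.ne' (div_pos hs ha).ne', mul_div_cancel₀ s ha.ne']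
  linarith [log_le_sub_one_of_pos ha, log_le_sub_one_of_pos (div_pos hs ha)]

theorem mul_add_log_le_of_neg {y μ : ℝ} (hy : 0 < y) (hμ : μ < 0) :
    y * μ + log y ≤ -1 - log (-μ) := by
  have h := log_le_sub_one_of_pos (mul_pos hy (neg_pos.mpr hμ))
  rw [log_mul hy.ne' (neg_ne_zero.mpr hμ.ne)] at h
  linarith

theorem div_le_neg_one_sub_log_neg_sub {t γ : ℝ} (ht : t < 0) (hγ : 0 < γ) :
    γ * (1 + t) ^ 2 / ((1 + γ) * (1 - γ * t)) ≤ -1 - (log (-t) + t) := by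
  have hγt : 0 < 1 - γ * t := by nlinarith
  have hlog := log_le_add_div_sub_two (a := (1 - γ * t) / (1 + γ)) (by positivity) (neg_pos.mpr ht)
  have hgap : γ * (1 + t) ^ 2 / ((1 + γ) * (1 - γ * t))
      = 1 - t - (1 - γ * t) / (1 + γ) - -t / ((1 - γ * t) / (1 + γ)) := by
    field_simp
    ring
  linarith

end Real

theorem inner_euclideanSpace_eq_sum {ι : Type*} [Fintype ι] (x u : EuclideanSpace ℝ ι) :
    ⟪x, u⟫ = ∑ i, x i * u i := by
  simp only [PiLp.inner_apply, RCLike.inner_apply, conj_trivial, mul_comm]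

theorem burg_of_pos {N : ℕ} {y : EuclideanSpace ℝ (Fin N)} (hy : ∀ i, 0 < y i) :
    burg N y = ((-∑ i, Real.log (y i) : ℝ) : EReal) :=
  if_pos hy

theorem inner_sub_burg_le {N : ℕ} {u : EuclideanSpace ℝ (Fin N)} (hu : ∀ i, u i < 0)
    (y : EuclideanSpace ℝ (Fin N)) :
    ((⟪y, u⟫ : ℝ) : EReal) - burg N y ≤ ((-(N : ℝ) - ∑ i, Real.log (-u i) : ℝ) : EReal) := by
  by_cases hy : ∀ i, 0 < y i
  · rw [burg_of_pos hy, ← EReal.coe_sub, EReal.coe_le_coe_iff, inner_euclideanSpace_eq_sum]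
    have hsum := Finset.sum_le_sum fun i (_ : i ∈ Finset.univ) =>
      Real.mul_add_log_le_of_neg (hy i) (hu i)
    simp only [Finset.sum_add_distrib, Finset.sum_sub_distrib, Finset.sum_const,
      Finset.card_univ, Fintype.card_fin, nsmul_eq_mul, mul_neg_one] at hsum
    linarith
  · rw [burg, if_neg hy, EReal.sub_top]
    exact bot_le

theorem fconjE_burg {N : ℕ} {u : EuclideanSpace ℝ (Fin N)} (hu : ∀ i, u i < 0) :
    fconjE (burg N) u = ((-(N : ℝ) - ∑ i, Real.log (-u i) : ℝ) : EReal) := by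
  refine le_antisymm (iSup_le (inner_sub_burg_le hu))
    (le_iSup_of_le (WithLp.toLp 2 fun i ↦ (-u i)⁻¹) ?_)
  have hpos : ∀ i, 0 < (-u i)⁻¹ := fun i ↦ inv_pos.mpr (neg_pos.mpr (hu i))
  have hinner : ∀ i, (-u i)⁻¹ * u i = -1 := fun i ↦ by field_simp [(hu i).ne]
  rw [burg_of_pos hpos, ← EReal.coe_sub, EReal.coe_le_coe_iff, inner_euclideanSpace_eq_sum]
  simp only [hinner, Real.log_inv, Finset.sum_neg_distrib, Finset.sum_const, Finset.card_univ,
    Fintype.card_fin, nsmul_eq_mul]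
  linarith

/-- For the negative Burg entropy `φ`, `x ∈ (0,∞)^N`, `u* ∈ (−∞,0)^N` and `γ > 0`:
`L_φ(x,u*) = −N − ∑ᵢ (ln(−ξᵢμᵢ*) + ξᵢμᵢ*)` and
`L_φ(x,u*) ≥ ∑ᵢ γ(1+ξᵢμᵢ*)²/((1+γ)(1−γξᵢμᵢ*))`. -/
theorem burg_fenchelYoung_formula_and_bound
    (N : ℕ) (x u : EuclideanSpace ℝ (Fin N)) (γ : ℝ)
    (hx : ∀ i, 0 < x i) (hu : ∀ i, u i < 0) (hγ : 0 < γ) :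
    burg N x + fconjE (burg N) u - ((⟪x, u⟫ : ℝ) : EReal)
        = (((-(N : ℝ) - ∑ i, (Real.log (-(x i * u i)) + x i * u i)) : ℝ) : EReal)
    ∧ (((∑ i, γ * (1 + x i * u i) ^ 2 / ((1 + γ) * (1 - γ * (x i * u i)))) : ℝ) : EReal)
        ≤ burg N x + fconjE (burg N) u - ((⟪x, u⟫ : ℝ) : EReal) := by
  have hlog : ∀ i, Real.log (-(x i * u i)) = Real.log (x i) + Real.log (-u i) := fun i ↦ by
    rw [← mul_neg, Real.log_mul (hx i).ne' (neg_ne_zero.mpr (hu i).ne)]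
  have hformula : burg N x + fconjE (burg N) u - ((⟪x, u⟫ : ℝ) : EReal)
      = (((-(N : ℝ) - ∑ i, (Real.log (-(x i * u i)) + x i * u i)) : ℝ) : EReal) := by
    rw [burg_of_pos hx, fconjE_burg hu, ← EReal.coe_add, ← EReal.coe_sub, EReal.coe_eq_coe_iff]
    simp only [hlog, Finset.sum_add_distrib, inner_euclideanSpace_eq_sum]
    ring
  refine ⟨hformula, ?_⟩
  rw [hformula, EReal.coe_le_coe_iff]
  have hsum := Finset.sum_le_sum fun i (_ : i ∈ Finset.univ) ↦
    Real.div_le_neg_one_sub_log_neg_sub (mul_neg_of_pos_of_neg (hx i) (hu i)) hγ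
  simp only [Finset.sum_sub_distrib, Finset.sum_const, Finset.card_univ, Fintype.card_fin,
    nsmul_eq_mul, mul_neg_one] at hsum
  linarith
end

section
/- In the scalar case N = 1 with the negative Burg entropy φ(ξ) = −ln(ξ) on (0,∞), for ξ > 0, μ* < 0, and γ > 0 one has the inequality −1 − ln(−ξμ*) − ξμ* ≥ γ(1 + ξμ*)² / ((1+γ)(1 − γξμ*)). -/
theorem burg_scalar_aux (t γ : ℝ) (ht0 : 0 < t) (hγ : 0 < γ) :
    γ * (1 - t) ^ 2 / ((1 + γ) * (1 + γ * t)) ≤ -1 - Real.log t + t := by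
  have h1 : (0:ℝ) < 1 + γ * t := by positivity
  set c : ℝ := (1 + γ) / (1 + γ * t) with hc
  have hc0 : 0 < c := by positivity
  have hlog1 : Real.log (c * t) ≤ c * t - 1 :=
    Real.log_le_sub_one_of_pos (by positivity)
  have hlog2 : Real.log c⁻¹ ≤ c⁻¹ - 1 :=
    Real.log_le_sub_one_of_pos (by positivity)
  have hlog : Real.log t ≤ c * t + c⁻¹ - 2 := by
    have : Real.log t = Real.log (c * t) + Real.log c⁻¹ := by
      rw [Real.log_mul (ne_of_gt hc0) (ne_of_gt ht0), Real.log_inv]; ring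
    rw [this]; linarith
  have key : γ * (1 - t) ^ 2 / ((1 + γ) * (1 + γ * t))
      = -1 - (c * t + c⁻¹ - 2) + t := by
    rw [hc]
    have h1γ : (0:ℝ) < 1 + γ := by linarith
    field_simp
    ring
  linarith [key.le]

/-- Scalar Burg-entropy inequality: for `ξ > 0`, `μ* < 0`, `γ > 0`,
`−1 − ln(−ξμ*) − ξμ* ≥ γ(1+ξμ*)²/((1+γ)(1−γξμ*))`. -/
theorem burg_scalar_inequality (ξ μ γ : ℝ) (hξ : 0 < ξ) (hμ : μ < 0) (hγ : 0 < γ) :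
    γ * (1 + ξ * μ) ^ 2 / ((1 + γ) * (1 - γ * (ξ * μ)))
      ≤ -1 - Real.log (-(ξ * μ)) - ξ * μ := by
  have ht0 : 0 < -(ξ * μ) := by
    have : ξ * μ < 0 := mul_neg_of_pos_of_neg hξ hμ
    linarith
  have h := burg_scalar_aux (-(ξ * μ)) γ ht0 hγ
  have e : γ * (1 + ξ * μ) ^ 2 / ((1 + γ) * (1 - γ * (ξ * μ)))
      = γ * (1 - -(ξ * μ)) ^ 2 / ((1 + γ) * (1 + γ * -(ξ * μ))) := by ring_nf
  rw [e]
  linarith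
end
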